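/- More generally, for any real numbers (or rationals) c_1, ..., c_k with c_h = 1 for some 1 < h < k: if both continued fractions are well defined, then [c_1, ..., c_k] = [c_1, ..., c_{h-1}−1, c_{h+1}−1, ..., c_k]. -/

import Mathlib

/-- Hirzebruch–Jung continued fraction `[c_1,...,c_k] = c_1 - 1/[c_2,...,c_k]`,
`[c_k] = c_k`; returns `none` if the list is empty or a division by zero occurs. -/
def hjcf : List ℚ → Option ℚ
  | [] => none
  | [c] => some c
  | c :: l@(_ :: _) =>
      (hjcf l).bind fun v => if v = 0 then none else some (c - 1 / v)

lemma hjcf_cons_eq_some_iff {c r : ℚ} {l : List ℚ} (hl : l ≠ []) :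
    hjcf (c :: l) = some r ↔ ∃ v, hjcf l = some v ∧ v ≠ 0 ∧ r = c - 1 / v := by
  obtain ⟨x, xs, rfl⟩ := List.exists_cons_of_ne_nil hl
  rw [hjcf, Option.bind_eq_some_iff]
  refine exists_congr fun v => and_congr_right fun _ => ?_
  split_ifs with hv <;> simp [hv, eq_comm]

lemma hjcf_sub_head (c t : ℚ) (l : List ℚ) :
    hjcf ((c - t) :: l) = (hjcf (c :: l)).map (· - t) := by
  cases l with
  | nil => simp [hjcf]
  | cons x xs =>
    simp only [hjcf]
    cases hjcf (x :: xs) with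
    | none => rfl
    | some v => by_cases hv : v = 0 <;> simp [hv, sub_right_comm]

-- Unfolding `[a, 1, b, …]` with `v = [b, …]`: `a - 1/(1 - 1/v) = a - 1 - 1/(v - 1)`.
lemma hjcf_blowdown_head (l : List ℚ) {a b r r' : ℚ}
    (h : hjcf (a :: 1 :: b :: l) = some r)
    (h' : hjcf ((a - 1) :: (b - 1) :: l) = some r') :
    r = r' := by
  obtain ⟨w, hw, hw0, rfl⟩ := (hjcf_cons_eq_some_iff (List.cons_ne_nil _ _)).1 h
  obtain ⟨v, hv, hv0, rfl⟩ := (hjcf_cons_eq_some_iff (List.cons_ne_nil _ _)).1 hw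
  obtain ⟨u, hu, hu0, rfl⟩ := (hjcf_cons_eq_some_iff (List.cons_ne_nil _ _)).1 h'
  rw [hjcf_sub_head, hv, Option.map_some, Option.some_inj] at hu
  subst hu
  field_simp
  ring

/-- Invariance of the value of a continued fraction under blow-down: if a chain
of rationals contains an interior entry equal to `1`, and both the chain and
its blow-down (removing that entry and decreasing both neighbors by `1`) have
well-defined continued fractions, then the two values agree. -/
theorem blowdown_preserves_value (l₁ l₂ : List ℚ) (a b : ℚ) (r r' : ℚ)
    (h : hjcf (l₁ ++ a :: 1 :: b :: l₂) = some r)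
    (h' : hjcf (l₁ ++ (a - 1) :: (b - 1) :: l₂) = some r') :
    r = r' := by
  induction l₁ generalizing r r' with
  | nil => exact hjcf_blowdown_head l₂ h h'
  | cons c l₁ ih =>
    obtain ⟨v, hv, -, rfl⟩ := (hjcf_cons_eq_some_iff (by simp)).1 h
    obtain ⟨v', hv', -, rfl⟩ := (hjcf_cons_eq_some_iff (by simp)).1 h'
    rw [ih v v' hv hv']
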